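/- The normalized matrix of maximum out forests J̄ of any weighted digraph is idempotent: J̄² = J̄. -/

import Mathlib

open scoped Classical
open Finset

variable {n : ℕ}

/-- The arc relation of a finite arc set. -/
def arcRel (F : Finset (Fin n × Fin n)) : Fin n → Fin n → Prop :=
  fun a b => (a, b) ∈ F

/-- A diverging forest: no directed cycles, and every vertex has in-degree at most 1. -/
def IsDivForest (F : Finset (Fin n × Fin n)) : Prop :=
  (∀ v, ¬ Relation.TransGen (arcRel F) v v) ∧
  ∀ w z₁ z₂, (z₁, w) ∈ F → (z₂, w) ∈ F → z₁ = z₂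

/-- `F` is a spanning diverging forest of the weighted digraph whose arcs are the
pairs of positive weight under `ε`. -/
def IsSpForest (ε : Fin n → Fin n → ℝ) (F : Finset (Fin n × Fin n)) : Prop :=
  (∀ p ∈ F, 0 < ε p.1 p.2) ∧ IsDivForest F

/-- The weight of a forest: the product of its arc weights. -/
noncomputable def fweight (ε : Fin n → Fin n → ℝ) (F : Finset (Fin n × Fin n)) : ℝ :=
  ∏ p ∈ F, ε p.1 p.2

/-- The weight of a set of forests: the sum of the weights of its members. -/
noncomputable def swt (ε : Fin n → Fin n → ℝ)
    (S : Finset (Finset (Fin n × Fin n))) : ℝ :=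
  ∑ F ∈ S, fweight ε F

/-- The set of spanning diverging forests with `k` arcs. -/
noncomputable def forestsK (ε : Fin n → Fin n → ℝ) (k : ℕ) :
    Finset (Finset (Fin n × Fin n)) :=
  Finset.univ.filter (fun F => IsSpForest ε F ∧ F.card = k)

/-- The set of spanning diverging forests with `k` arcs in which vertex `i` belongs to
the tree diverging from `j` (so `j` is a root and `i` is reachable from `j`). -/
noncomputable def forestsKji (ε : Fin n → Fin n → ℝ) (k : ℕ) (j i : Fin n) :
    Finset (Finset (Fin n × Fin n)) :=
  (forestsK ε k).filter (fun F => (∀ u, (u, j) ∉ F) ∧ Relation.ReflTransGen (arcRel F) j i)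

/-- The maximum number of arcs in a spanning diverging forest, equal to `n - v`
where `v` is the forest dimension. -/
noncomputable def maxArcs (ε : Fin n → Fin n → ℝ) : ℕ :=
  (Finset.univ.filter (fun F : Finset (Fin n × Fin n) => IsSpForest ε F)).sup Finset.card

/-- The Kirchhoff matrix of the weighted digraph with weights `ε`. -/
noncomputable def Kirchhoff (ε : Fin n → Fin n → ℝ) : Matrix (Fin n) (Fin n) ℝ :=
  Matrix.of fun i j =>
    if i = j then ∑ k ∈ Finset.univ.filter (· ≠ i), ε k i else - ε j i

/-- The matrix of maximum out forests: entry `(i, j)` is the total weight of maximum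
out forests in which `i` lies in the tree diverging from `j`. -/
noncomputable def Qmax (ε : Fin n → Fin n → ℝ) : Matrix (Fin n) (Fin n) ℝ :=
  Matrix.of fun i j => swt ε (forestsKji ε (maxArcs ε) j i)

/-- The normalized matrix of maximum out forests. -/
noncomputable def Jbar (ε : Fin n → Fin n → ℝ) : Matrix (Fin n) (Fin n) ℝ :=
  (swt ε (forestsK ε (maxArcs ε)))⁻¹ • Qmax ε

/-!
Write `Qₖ = forestMatrix ε k` for the matrix of out forests with `k` arcs, so that `Q₀ = 1` and
`Qmax ε = Qₘ` for `m = maxArcs ε`, and `σₖ` for the total weight of forests with `k` arcs.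
Three weight-preserving bijections (cutting the arc from a root `j` to its child towards `i`,
attaching the root `j` below a new parent, and rerooting the tree of `j` at a child) give the
recursion `Qₖ₊₁ = σₖ₊₁ • 1 - Qₖ * L` for the Kirchhoff matrix `L`. As there are no forests with
`m + 1` arcs, `Qₘ * L = 0`; induction on `k` then gives `Qₘ * Qₖ = σₖ • Qₘ`, and for `k = m`
this is `Qₘ * Qₘ = σₘ • Qₘ` with `σₘ > 0`.
-/

open Relation
open scoped Matrix

abbrev Reach (F : Finset (Fin n × Fin n)) : Fin n → Fin n → Prop :=
  ReflTransGen (arcRel F)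

abbrev IsRoot (F : Finset (Fin n × Fin n)) (j : Fin n) : Prop :=
  ∀ u, (u, j) ∉ F

section Reach

variable {F G : Finset (Fin n × Fin n)} {a b j x : Fin n}

theorem reach_mono (h : F ⊆ G) (hr : Reach F a b) : Reach G a b :=
  ReflTransGen.mono (fun _ _ hx => h hx) _ _ hr

theorem IsRoot.mono (h : F ⊆ G) (hj : IsRoot G j) : IsRoot F j :=
  fun u hu => hj u (h hu)

theorem IsRoot.eq_of_reach (hj : IsRoot F j) (hr : Reach F x j) : x = j := by
  rcases hr.cases_tail with h | ⟨c, -, hc⟩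
  · exact h.symm
  · exact absurd hc (hj c)

theorem exists_mem_reach_of_reach (h : Reach F j x) (hne : j ≠ x) :
    ∃ m, (j, m) ∈ F ∧ Reach F m x := by
  rcases h.cases_head with rfl | h
  · exact absurd rfl hne
  · exact h

theorem reach_insert {e : Fin n × Fin n} (h : Reach (insert e F) a b) :
    Reach F a b ∨ (Reach F a e.1 ∧ Reach F e.2 b) := by
  induction h with
  | refl => exact Or.inl .refl
  | tail _ hbc ih =>
    rcases Finset.mem_insert.1 hbc with rfl | hF
    · exact Or.inr ⟨ih.elim id And.left, .refl⟩
    · exact ih.imp (·.tail hF) fun h => ⟨h.1, h.2.tail hF⟩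

theorem transGen_insert {e : Fin n × Fin n} (h : TransGen (arcRel (insert e F)) a b) :
    TransGen (arcRel F) a b ∨ (Reach F a e.1 ∧ Reach F e.2 b) := by
  induction h with
  | single hab =>
    rcases Finset.mem_insert.1 hab with rfl | hF
    · exact Or.inr ⟨.refl, .refl⟩
    · exact Or.inl (.single hF)
  | tail _ hbc ih =>
    rcases Finset.mem_insert.1 hbc with rfl | hF
    · exact Or.inr ⟨ih.elim TransGen.to_reflTransGen And.left, .refl⟩
    · exact ih.imp (·.tail hF) fun h => ⟨h.1, h.2.tail hF⟩

theorem reach_erase (e : Fin n × Fin n) (h : Reach F a b) :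
    Reach (F.erase e) a b ∨ Reach (F.erase e) e.2 b := by
  induction h with
  | refl => exact Or.inl .refl
  | @tail x y _ hxy ih =>
    by_cases he : (x, y) = e
    · exact Or.inr (he ▸ .refl)
    · have harc : arcRel (F.erase e) x y := Finset.mem_erase.2 ⟨he, hxy⟩
      exact ih.imp (·.tail harc) (·.tail harc)

theorem reach_erase_of_not_reach {u v : Fin n} (h : Reach F a b) (hu : ¬ Reach F a u) :
    Reach (F.erase (u, v)) a b := by
  induction h with
  | refl => exact .refl
  | @tail x y hax hxy ih =>
    refine ih.tail (Finset.mem_erase.2 ⟨fun he => hu ?_, hxy⟩)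
    rwa [(Prod.mk.inj he).1] at hax

theorem isRoot_erase {u v : Fin n} (hF : IsDivForest F) (huv : (u, v) ∈ F) :
    IsRoot (F.erase (u, v)) v := fun w hw => by
  obtain ⟨hne, hw⟩ := Finset.mem_erase.1 hw
  exact hne (by rw [hF.2 v w u hw huv])

theorem IsRoot.insert {u v : Fin n} (hj : IsRoot F j) (hv : v ≠ j) :
    IsRoot (insert (u, v) F) j := fun w hw => by
  rcases Finset.mem_insert.1 hw with h | h
  exacts [hv (Prod.mk.inj h).2.symm, hj w h]

theorem reach_insert_head {u v : Fin n} (h : Reach F v x) :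
    Reach (insert (u, v) F) u x :=
  .head (Finset.mem_insert_self _ _) (reach_mono (Finset.subset_insert _ _) h)

end Reach

section InDegree

variable {F : Finset (Fin n × Fin n)} {a b j p x : Fin n}

theorem reach_parent_of_reach (hin : ∀ w z₁ z₂, (z₁, w) ∈ F → (z₂, w) ∈ F → z₁ = z₂)
    (hpj : (p, j) ∈ F) (hr : Reach F a j) (hne : a ≠ j) : Reach F a p := by
  rcases hr.cases_tail with h | ⟨c, hac, hcj⟩
  · exact absurd h.symm hne
  · rwa [hin j c p hcj hpj] at hac

theorem reach_total (hin : ∀ w z₁ z₂, (z₁, w) ∈ F → (z₂, w) ∈ F → z₁ = z₂)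
    (ha : Reach F a x) (hb : Reach F b x) : Reach F a b ∨ Reach F b a := by
  induction ha generalizing b with
  | refl => exact Or.inr hb
  | @tail y z _ hyz ih =>
    rcases hb.cases_tail with rfl | ⟨c, hbc, hcz⟩
    · exact Or.inl (.tail ‹_› hyz)
    · exact ih (hin z y c hyz hcz ▸ hbc)

theorem IsRoot.eq_of_reach_of_reach (hin : ∀ w z₁ z₂, (z₁, w) ∈ F → (z₂, w) ∈ F → z₁ = z₂)
    (ha : IsRoot F a) (hb : IsRoot F b) (hax : Reach F a x) (hbx : Reach F b x) : a = b := by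
  rcases reach_total hin hax hbx with h | h
  · exact hb.eq_of_reach h
  · exact (ha.eq_of_reach h).symm

end InDegree

namespace IsDivForest

variable {F G : Finset (Fin n × Fin n)} {a b j m p x : Fin n}

theorem mono (hG : IsDivForest G) (h : F ⊆ G) : IsDivForest F :=
  ⟨fun v hv => hG.1 v (TransGen.mono (fun _ _ hx => h hx) _ _ hv),
    fun w z₁ z₂ h₁ h₂ => hG.2 w z₁ z₂ (h h₁) (h h₂)⟩

theorem not_reach_of_mem (hF : IsDivForest F) (h : (a, b) ∈ F) : ¬ Reach F b a :=
  fun hr => hF.1 b (TransGen.tail' hr h)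

theorem ne_of_mem (hF : IsDivForest F) (h : (a, b) ∈ F) : a ≠ b := by
  rintro rfl
  exact hF.1 a (.single h)

theorem reach_erase_of_mem (hF : IsDivForest F) (hpj : (p, j) ∈ F) (hr : Reach F a p) :
    Reach (F.erase (p, j)) a p :=
  (reach_erase (p, j) hr).resolve_right fun h =>
    hF.not_reach_of_mem hpj (reach_mono (Finset.erase_subset _ _) h)

theorem eq_of_mem_of_reach {m₁ m₂ : Fin n} (hF : IsDivForest F) (h₁ : (j, m₁) ∈ F)
    (h₂ : (j, m₂) ∈ F) (hx₁ : Reach F m₁ x) (hx₂ : Reach F m₂ x) : m₁ = m₂ := by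
  have key : ∀ {a b}, (j, a) ∈ F → (j, b) ∈ F → Reach F a b → a = b := fun ha hb hab => by
    by_contra hne
    exact hF.not_reach_of_mem ha (reach_parent_of_reach hF.2 hb hab hne)
  rcases reach_total hF.2 hx₁ hx₂ with h | h
  · exact key h₁ h₂ h
  · exact (key h₂ h₁ h).symm

theorem reach_erase_of_isRoot (hF : IsDivForest F) (hj : IsRoot F j) (hm : (j, m) ∈ F)
    (h : Reach F m x) : Reach (F.erase (j, m)) m x :=
  reach_erase_of_not_reach h fun h' => hF.ne_of_mem hm (hj.eq_of_reach h').symm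

end IsDivForest

namespace IsSpForest

variable {ε : Fin n → Fin n → ℝ} {F G : Finset (Fin n × Fin n)} {u v : Fin n}

theorem mono (hG : IsSpForest ε G) (h : F ⊆ G) : IsSpForest ε F :=
  ⟨fun p hp => hG.1 p (h hp), hG.2.mono h⟩

theorem insert (hF : IsSpForest ε F) (hpos : 0 < ε u v) (hv : IsRoot F v)
    (hvu : ¬ Reach F v u) : IsSpForest ε (insert (u, v) F) := by
  refine ⟨?_, fun x hx => ?_, fun w z₁ z₂ h₁ h₂ => ?_⟩
  · rintro p hp
    rcases Finset.mem_insert.1 hp with rfl | hp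
    exacts [hpos, hF.1 p hp]
  · rcases transGen_insert hx with h | ⟨h₁, h₂⟩
    exacts [hF.2.1 x h, hvu (h₂.trans h₁)]
  · simp only [Finset.mem_insert, Prod.mk.injEq] at h₁ h₂
    rcases h₁ with ⟨rfl, rfl⟩ | h₁
    · rcases h₂ with ⟨rfl, -⟩ | h₂
      exacts [rfl, absurd h₂ (hv z₂)]
    · rcases h₂ with ⟨rfl, rfl⟩ | h₂
      exacts [absurd h₁ (hv z₁), hF.2.2 w z₁ z₂ h₁ h₂]

end IsSpForest

noncomputable def childTo (F : Finset (Fin n × Fin n)) (j x : Fin n) : Fin n :=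
  if h : ∃ m, (j, m) ∈ F ∧ Reach F m x then h.choose else j

noncomputable def parentOf (F : Finset (Fin n × Fin n)) (j : Fin n) : Fin n :=
  if h : ∃ p, (p, j) ∈ F then h.choose else j

section ChildParent

variable {F : Finset (Fin n × Fin n)} {j m p x : Fin n}

theorem childTo_spec (h : Reach F j x) (hne : j ≠ x) :
    (j, childTo F j x) ∈ F ∧ Reach F (childTo F j x) x := by
  have h' := exists_mem_reach_of_reach h hne
  rw [childTo, dif_pos h']
  exact h'.choose_spec

theorem childTo_eq (hF : IsDivForest F) (hm : (j, m) ∈ F) (hr : Reach F m x) :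
    childTo F j x = m := by
  have h' : ∃ m, (j, m) ∈ F ∧ Reach F m x := ⟨m, hm, hr⟩
  rw [childTo, dif_pos h']
  exact hF.eq_of_mem_of_reach h'.choose_spec.1 hm h'.choose_spec.2 hr

theorem parentOf_mem (hj : ¬ IsRoot F j) : (parentOf F j, j) ∈ F := by
  have h' : ∃ p, (p, j) ∈ F := by simpa [IsRoot] using hj
  rw [parentOf, dif_pos h']
  exact h'.choose_spec

theorem parentOf_eq (hF : IsDivForest F) (hp : (p, j) ∈ F) : parentOf F j = p :=
  hF.2 j _ p (parentOf_mem fun h => h p hp) hp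

end ChildParent

section Forests

variable {ε : Fin n → Fin n → ℝ} {k : ℕ} {F : Finset (Fin n × Fin n)} {e : Fin n × Fin n}
  {i j u v : Fin n}

theorem isSpForest_empty : IsSpForest ε ∅ :=
  ⟨fun _ h => absurd h (Finset.notMem_empty _),
    fun _ h => by cases h <;> simp_all [arcRel],
    fun _ _ _ h => absurd h (Finset.notMem_empty _)⟩

theorem mem_forestsK : F ∈ forestsK ε k ↔ IsSpForest ε F ∧ F.card = k := by
  simp [forestsK]

theorem mem_forestsKji :
    F ∈ forestsKji ε k j i ↔ F ∈ forestsK ε k ∧ IsRoot F j ∧ Reach F j i :=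
  Finset.mem_filter

theorem erase_mem_forestsK (hF : F ∈ forestsK ε (k + 1)) (he : e ∈ F) :
    F.erase e ∈ forestsK ε k := by
  rw [mem_forestsK] at hF ⊢
  exact ⟨hF.1.mono (Finset.erase_subset _ _), by rw [Finset.card_erase_of_mem he, hF.2]; rfl⟩

theorem insert_mem_forestsK (hF : F ∈ forestsK ε k) (hpos : 0 < ε u v) (hv : IsRoot F v)
    (hvu : ¬ Reach F v u) : insert (u, v) F ∈ forestsK ε (k + 1) := by
  rw [mem_forestsK] at hF ⊢
  exact ⟨hF.1.insert hpos hv hvu, by rw [Finset.card_insert_of_notMem (hv u), hF.2]⟩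

theorem insert_erase_mem_forestsK (hF : F ∈ forestsK ε k) (he : e ∈ F) (hpos : 0 < ε u v)
    (hv : IsRoot (F.erase e) v) (hvu : ¬ Reach (F.erase e) v u) :
    insert (u, v) (F.erase e) ∈ forestsK ε k := by
  obtain ⟨k, rfl⟩ : ∃ k', k = k' + 1 :=
    Nat.exists_eq_add_one.2 ((mem_forestsK.1 hF).2 ▸ Finset.card_pos.2 ⟨e, he⟩)
  exact insert_mem_forestsK (erase_mem_forestsK hF he) hpos hv hvu

theorem fweight_insert (he : e ∉ F) : fweight ε (insert e F) = ε e.1 e.2 * fweight ε F :=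
  Finset.prod_insert he

theorem mul_fweight_erase (he : e ∈ F) : ε e.1 e.2 * fweight ε (F.erase e) = fweight ε F :=
  Finset.mul_prod_erase F (fun p => ε p.1 p.2) he

theorem fweight_insert_erase_mul (he : e ∈ F) (hu : (u, v) ∉ F.erase e) :
    fweight ε (insert (u, v) (F.erase e)) * ε e.1 e.2 = fweight ε F * ε u v := by
  rw [fweight_insert hu, ← mul_fweight_erase (ε := ε) he]
  ring

theorem ne_of_weight_pos (hloop : ∀ a, ε a a = 0) {a b : Fin n} (h : 0 < ε a b) :
    a ≠ b := by
  rintro rfl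
  exact h.ne' (hloop a)

end Forests

noncomputable def inPairs (ε : Fin n → Fin n → ℝ) (k : ℕ) (j i : Fin n) :
    Finset (Fin n × Finset (Fin n × Fin n)) :=
  Finset.univ.filter fun q => 0 < ε q.1 j ∧ q.2 ∈ forestsKji ε k j i

noncomputable def outPairs (ε : Fin n → Fin n → ℝ) (k : ℕ) (j i : Fin n) :
    Finset (Fin n × Finset (Fin n × Fin n)) :=
  Finset.univ.filter fun q => 0 < ε j q.1 ∧ q.2 ∈ forestsKji ε k q.1 i

section Pairs

variable {ε : Fin n → Fin n → ℝ} {k : ℕ} {q : Fin n × Finset (Fin n × Fin n)} {i j : Fin n}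

theorem mem_inPairs :
    q ∈ inPairs ε k j i ↔
      0 < ε q.1 j ∧ q.2 ∈ forestsK ε k ∧ IsRoot q.2 j ∧ Reach q.2 j i := by
  simp [inPairs, mem_forestsKji]

theorem mem_outPairs :
    q ∈ outPairs ε k j i ↔
      0 < ε j q.1 ∧ q.2 ∈ forestsK ε k ∧ IsRoot q.2 q.1 ∧ Reach q.2 q.1 i := by
  simp [outPairs, mem_forestsKji]

end Pairs

theorem sum_filter_fweight_mul (ε : Fin n → Fin n → ℝ) {g : Fin n → ℝ} (hg : ∀ p, 0 ≤ g p)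
    (S : Fin n → Finset (Finset (Fin n × Fin n))) :
    ∑ q ∈ Finset.univ.filter (fun q : Fin n × Finset (Fin n × Fin n) =>
        0 < g q.1 ∧ q.2 ∈ S q.1), fweight ε q.2 * g q.1
      = ∑ p, swt ε (S p) * g p := by
  rw [Finset.sum_filter, Fintype.sum_prod_type]
  refine Finset.sum_congr rfl fun p _ => ?_
  rcases (hg p).lt_or_eq with hp | hp
  · simp [hp, swt, Finset.sum_mul, Finset.sum_ite_mem]
  · simp [← hp]

theorem sum_inPairs {ε : Fin n → Fin n → ℝ} (hnonneg : ∀ a b, 0 ≤ ε a b) (k : ℕ)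
    (j i : Fin n) :
    ∑ q ∈ inPairs ε k j i, fweight ε q.2 * ε q.1 j
      = swt ε (forestsKji ε k j i) * ∑ p, ε p j := by
  rw [Finset.mul_sum]
  exact sum_filter_fweight_mul ε (fun p => hnonneg p j) fun _ => forestsKji ε k j i

theorem sum_outPairs {ε : Fin n → Fin n → ℝ} (hnonneg : ∀ a b, 0 ≤ ε a b) (k : ℕ)
    (j i : Fin n) :
    ∑ q ∈ outPairs ε k j i, fweight ε q.2 * ε j q.1
      = ∑ m, swt ε (forestsKji ε k m i) * ε j m :=
  sum_filter_fweight_mul ε (hnonneg j) fun m => forestsKji ε k m i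

section Detach

variable {ε : Fin n → Fin n → ℝ} {k : ℕ} {G : Finset (Fin n × Fin n)}
  {q : Fin n × Finset (Fin n × Fin n)} {i j : Fin n}

theorem childTo_erase_mem_filter_isRoot (hG : G ∈ forestsKji ε (k + 1) j i) (hji : j ≠ i) :
    (childTo G j i, G.erase (j, childTo G j i)) ∈ (outPairs ε k j i).filter (IsRoot ·.2 j) := by
  obtain ⟨hGk, hj, hji'⟩ := mem_forestsKji.1 hG
  obtain ⟨hm, hmi⟩ := childTo_spec hji' hji
  have hsp := (mem_forestsK.1 hGk).1
  exact Finset.mem_filter.2 ⟨mem_outPairs.2 ⟨hsp.1 _ hm, erase_mem_forestsK hGk hm,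
    isRoot_erase hsp.2 hm, hsp.2.reach_erase_of_isRoot hj hm hmi⟩,
    hj.mono (Finset.erase_subset _ _)⟩

theorem insert_mem_forestsKji_succ (hloop : ∀ a, ε a a = 0)
    (hq : q ∈ (outPairs ε k j i).filter (IsRoot ·.2 j)) :
    insert (j, q.1) q.2 ∈ forestsKji ε (k + 1) j i := by
  obtain ⟨hq, hj⟩ := Finset.mem_filter.1 hq
  obtain ⟨hpos, hFk, hm, hmi⟩ := mem_outPairs.1 hq
  have hmj := (ne_of_weight_pos hloop hpos).symm
  exact mem_forestsKji.2 ⟨insert_mem_forestsK hFk hpos hm fun h => hmj (hj.eq_of_reach h),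
    hj.insert hmj, reach_insert_head hmi⟩

theorem swt_forestsKji_succ_of_ne (hloop : ∀ a, ε a a = 0) (hji : j ≠ i) :
    swt ε (forestsKji ε (k + 1) j i)
      = ∑ q ∈ (outPairs ε k j i).filter (IsRoot ·.2 j), fweight ε q.2 * ε j q.1 := by
  refine Finset.sum_nbij' (fun G => (childTo G j i, G.erase (j, childTo G j i)))
    (fun q => insert (j, q.1) q.2) (fun G hG => childTo_erase_mem_filter_isRoot hG hji)
    (fun q hq => insert_mem_forestsKji_succ hloop hq) (fun G hG => ?_) (fun q hq => ?_)
    (fun G hG => ?_)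
  · obtain ⟨-, -, hji'⟩ := mem_forestsKji.1 hG
    exact Finset.insert_erase (childTo_spec hji' hji).1
  · obtain ⟨hmG, -, -⟩ := mem_forestsKji.1 (insert_mem_forestsKji_succ hloop hq)
    obtain ⟨-, -, hm, hmi⟩ := mem_outPairs.1 (Finset.mem_filter.1 hq).1
    rw [childTo_eq (mem_forestsK.1 hmG).1.2 (Finset.mem_insert_self _ _)
      (reach_mono (Finset.subset_insert _ _) hmi), Finset.erase_insert (hm j)]
  · obtain ⟨-, -, hji'⟩ := mem_forestsKji.1 hG
    rw [mul_comm]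
    exact (mul_fweight_erase (childTo_spec hji' hji).1).symm

end Detach

section AttachRoot

variable {ε : Fin n → Fin n → ℝ} {k : ℕ} {G : Finset (Fin n × Fin n)}
  {q : Fin n × Finset (Fin n × Fin n)} {j : Fin n}

theorem insert_mem_filter_not_isRoot
    (hq : q ∈ (inPairs ε k j j).filter fun q => ¬ Reach q.2 j q.1) :
    insert (q.1, j) q.2 ∈ (forestsK ε (k + 1)).filter (¬ IsRoot · j) := by
  obtain ⟨hq, hjp⟩ := Finset.mem_filter.1 hq
  obtain ⟨hpos, hFk, hj, -⟩ := mem_inPairs.1 hq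
  exact Finset.mem_filter.2
    ⟨insert_mem_forestsK hFk hpos hj hjp, fun h => h q.1 (Finset.mem_insert_self _ _)⟩

theorem parentOf_erase_mem_filter (hG : G ∈ (forestsK ε (k + 1)).filter (¬ IsRoot · j)) :
    (parentOf G j, G.erase (parentOf G j, j))
      ∈ (inPairs ε k j j).filter fun q => ¬ Reach q.2 j q.1 := by
  obtain ⟨hGk, hj⟩ := Finset.mem_filter.1 hG
  have hp := parentOf_mem hj
  have hsp := (mem_forestsK.1 hGk).1
  exact Finset.mem_filter.2 ⟨mem_inPairs.2 ⟨hsp.1 _ hp, erase_mem_forestsK hGk hp,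
    isRoot_erase hsp.2 hp, .refl⟩,
    fun h => hsp.2.not_reach_of_mem hp (reach_mono (Finset.erase_subset _ _) h)⟩

theorem sum_filter_not_reach_inPairs_self :
    ∑ q ∈ (inPairs ε k j j).filter (fun q => ¬ Reach q.2 j q.1), fweight ε q.2 * ε q.1 j
      = ∑ G ∈ (forestsK ε (k + 1)).filter (¬ IsRoot · j), fweight ε G := by
  refine Finset.sum_nbij' (fun q => insert (q.1, j) q.2)
    (fun G => (parentOf G j, G.erase (parentOf G j, j)))
    (fun q hq => insert_mem_filter_not_isRoot hq) (fun G hG => parentOf_erase_mem_filter hG)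
    (fun q hq => ?_) (fun G hG => ?_) (fun q hq => ?_)
  · have hG := Finset.mem_filter.1 (insert_mem_filter_not_isRoot hq)
    obtain ⟨-, -, hj, -⟩ := mem_inPairs.1 (Finset.mem_filter.1 hq).1
    rw [parentOf_eq (mem_forestsK.1 hG.1).1.2 (Finset.mem_insert_self _ _),
      Finset.erase_insert (hj q.1)]
  · exact Finset.insert_erase (parentOf_mem (Finset.mem_filter.1 hG).2)
  · obtain ⟨-, -, hj, -⟩ := mem_inPairs.1 (Finset.mem_filter.1 hq).1
    rw [fweight_insert (hj q.1), mul_comm]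

end AttachRoot

/-- Cut the root `j` from its child `m` towards `p` (towards `i` if `p` lies outside the tree
of `j`) and hang `j`, with what remains of its tree, below `p`; `i` ends up in the tree of the
new root `m`. -/
noncomputable def reroot (j i : Fin n) (q : Fin n × Finset (Fin n × Fin n)) :
    Fin n × Finset (Fin n × Fin n) :=
  let m := childTo q.2 j (if Reach q.2 j q.1 then q.1 else i)
  (m, insert (q.1, j) (q.2.erase (j, m)))

noncomputable def unreroot (j : Fin n) (q : Fin n × Finset (Fin n × Fin n)) :
    Fin n × Finset (Fin n × Fin n) :=
  let p := parentOf q.2 j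
  (p, insert (j, q.1) (q.2.erase (p, j)))

section Reroot

variable {ε : Fin n → Fin n → ℝ} {k : ℕ} {F : Finset (Fin n × Fin n)}
  {q : Fin n × Finset (Fin n × Fin n)} {i j m p : Fin n}

theorem not_reach_erase_of_reach_ite (hF : IsDivForest F) (hj : IsRoot F j) (hm : (j, m) ∈ F)
    (hmt : Reach F m (if Reach F j p then p else i)) : ¬ Reach (F.erase (j, m)) j p := by
  intro h
  rw [if_pos (reach_mono (Finset.erase_subset _ _) h)] at hmt
  exact hF.ne_of_mem hm <| (hj.mono (Finset.erase_subset _ _)).eq_of_reach_of_reach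
    (hF.mono (Finset.erase_subset _ _)).2 (isRoot_erase hF hm) h
    (hF.reach_erase_of_isRoot hj hm hmt)

theorem reach_insert_erase_of_reach_ite (hF : IsDivForest F) (hj : IsRoot F j) (hm : (j, m) ∈ F)
    (hji : Reach F j i) (hmt : Reach F m (if Reach F j p then p else i)) :
    Reach (insert (p, j) (F.erase (j, m))) m i := by
  have hmt₀ := hF.reach_erase_of_isRoot hj hm hmt
  split_ifs at hmt₀
  · rcases reach_erase (j, m) hji with h | h
    · exact ((reach_mono (Finset.subset_insert _ _) hmt₀).tail (Finset.mem_insert_self _ _)).trans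
        (reach_mono (Finset.subset_insert _ _) h)
    · exact reach_mono (Finset.subset_insert _ _) h
  · exact reach_mono (Finset.subset_insert _ _) hmt₀

theorem reroot_child_spec (hloop : ∀ a, ε a a = 0)
    (hq : q ∈ (inPairs ε k j i).filter fun q => Reach q.2 j q.1 ∨ j ≠ i) :
    (j, (reroot j i q).1) ∈ q.2 ∧
      Reach q.2 (reroot j i q).1 (if Reach q.2 j q.1 then q.1 else i) := by
  obtain ⟨hq, hjp⟩ := Finset.mem_filter.1 hq
  obtain ⟨hpos, -, -, hji⟩ := mem_inPairs.1 hq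
  refine childTo_spec ?_ ?_ <;> split_ifs with h
  exacts [h, hji, (ne_of_weight_pos hloop hpos).symm, hjp.resolve_left h]

theorem reroot_mem (hloop : ∀ a, ε a a = 0)
    (hq : q ∈ (inPairs ε k j i).filter fun q => Reach q.2 j q.1 ∨ j ≠ i) :
    reroot j i q ∈ (outPairs ε k j i).filter (¬ IsRoot ·.2 j) := by
  obtain ⟨hm, hmt⟩ := reroot_child_spec hloop hq
  obtain ⟨hpos, hFk, hj, hji⟩ := mem_inPairs.1 (Finset.mem_filter.1 hq).1
  have hF := (mem_forestsK.1 hFk).1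
  refine Finset.mem_filter.2 ⟨mem_outPairs.2 ⟨hF.1 _ hm, ?_, ?_, ?_⟩, ?_⟩
  · exact insert_erase_mem_forestsK hFk hm hpos (hj.mono (Finset.erase_subset _ _))
      (not_reach_erase_of_reach_ite hF.2 hj hm hmt)
  · exact (isRoot_erase hF.2 hm).insert (hF.2.ne_of_mem hm)
  · exact reach_insert_erase_of_reach_ite hF.2 hj hm hji hmt
  · exact fun h => h q.1 (Finset.mem_insert_self _ _)

theorem unreroot_mem (hloop : ∀ a, ε a a = 0)
    (hq : q ∈ (outPairs ε k j i).filter (¬ IsRoot ·.2 j)) :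
    unreroot j q ∈ (inPairs ε k j i).filter fun q => Reach q.2 j q.1 ∨ j ≠ i := by
  obtain ⟨hq, hj⟩ := Finset.mem_filter.1 hq
  obtain ⟨hpos, hFk, hm, hmi⟩ := mem_outPairs.1 hq
  have hF := (mem_forestsK.1 hFk).1
  have hp := parentOf_mem hj
  have hmj := (ne_of_weight_pos hloop hpos).symm
  have hj₁ := isRoot_erase hF.2 hp
  refine Finset.mem_filter.2 ⟨mem_inPairs.2 ⟨hF.1 _ hp, ?_, hj₁.insert hmj, ?_⟩, ?_⟩
  · exact insert_erase_mem_forestsK hFk hp hpos (hm.mono (Finset.erase_subset _ _))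
      fun h => hmj (hj₁.eq_of_reach h)
  · rcases reach_erase (parentOf q.2 j, j) hmi with h | h
    exacts [reach_insert_head h, reach_mono (Finset.subset_insert _ _) h]
  · refine or_iff_not_imp_right.2 fun hji => ?_
    rw [not_not] at hji
    subst hji
    exact reach_insert_head <| hF.2.reach_erase_of_mem hp <|
      reach_parent_of_reach hF.2.2 hp hmi hmj

theorem reach_ite_of_unreroot {F : Finset (Fin n × Fin n)} (hF : IsDivForest F) (hp : (p, j) ∈ F)
    (hmi : Reach F m i) :
    let H := insert (j, m) (F.erase (p, j))
    Reach H m (if Reach H j p then p else i) := by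
  intro H
  split_ifs with h
  · rcases reach_insert h with h | ⟨-, h⟩
    · exact absurd (reach_mono (Finset.erase_subset _ _) h) (hF.not_reach_of_mem hp)
    · exact reach_mono (Finset.subset_insert _ _) h
  · have hmp : ¬ Reach F m p := fun h' => h (reach_insert_head (hF.reach_erase_of_mem hp h'))
    exact reach_mono (Finset.subset_insert _ _) (reach_erase_of_not_reach hmi hmp)

theorem unreroot_reroot (hloop : ∀ a, ε a a = 0)
    (hq : q ∈ (inPairs ε k j i).filter fun q => Reach q.2 j q.1 ∨ j ≠ i) :
    unreroot j (reroot j i q) = q := by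
  obtain ⟨hm, -⟩ := reroot_child_spec hloop hq
  obtain ⟨-, -, hj, -⟩ := mem_inPairs.1 (Finset.mem_filter.1 hq).1
  obtain ⟨-, hGk, -, -⟩ := mem_outPairs.1 (Finset.mem_filter.1 (reroot_mem hloop hq)).1
  have hp : parentOf (reroot j i q).2 j = q.1 :=
    parentOf_eq (mem_forestsK.1 hGk).1.2 (Finset.mem_insert_self _ _)
  simp only [unreroot, hp]
  rw [reroot, Finset.erase_insert fun h => hj _ (Finset.mem_of_mem_erase h)]
  exact Prod.ext rfl (Finset.insert_erase hm)

theorem reroot_unreroot (hloop : ∀ a, ε a a = 0)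
    (hq : q ∈ (outPairs ε k j i).filter (¬ IsRoot ·.2 j)) :
    reroot j i (unreroot j q) = q := by
  obtain ⟨hq', hj⟩ := Finset.mem_filter.1 hq
  obtain ⟨-, hFk, hm, hmi⟩ := mem_outPairs.1 hq'
  have hp := parentOf_mem hj
  obtain ⟨-, hHk, -, -⟩ := mem_inPairs.1 (Finset.mem_filter.1 (unreroot_mem hloop hq)).1
  have hchild : (reroot j i (unreroot j q)).1 = q.1 :=
    childTo_eq (mem_forestsK.1 hHk).1.2 (Finset.mem_insert_self _ _)
      (reach_ite_of_unreroot (mem_forestsK.1 hFk).1.2 hp hmi)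
  refine Prod.ext hchild ?_
  change insert (parentOf q.2 j, j)
    ((unreroot j q).2.erase (j, (reroot j i (unreroot j q)).1)) = q.2
  rw [hchild, unreroot, Finset.erase_insert fun h => hm _ (Finset.mem_of_mem_erase h),
    Finset.insert_erase hp]

theorem sum_reroot (hloop : ∀ a, ε a a = 0) :
    ∑ q ∈ (inPairs ε k j i).filter (fun q => Reach q.2 j q.1 ∨ j ≠ i), fweight ε q.2 * ε q.1 j
      = ∑ q ∈ (outPairs ε k j i).filter (¬ IsRoot ·.2 j), fweight ε q.2 * ε j q.1 := by
  refine Finset.sum_nbij' (reroot j i) (unreroot j) (fun q hq => reroot_mem hloop hq)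
    (fun q hq => unreroot_mem hloop hq) (fun q hq => unreroot_reroot hloop hq)
    (fun q hq => reroot_unreroot hloop hq) (fun q hq => ?_)
  obtain ⟨hm, -⟩ := reroot_child_spec hloop hq
  obtain ⟨-, -, hj, -⟩ := mem_inPairs.1 (Finset.mem_filter.1 hq).1
  exact (fweight_insert_erase_mul hm fun h => hj _ (Finset.mem_of_mem_erase h)).symm

end Reroot

section Recursion

variable {ε : Fin n → Fin n → ℝ}

theorem forestsKji_self (k : ℕ) (j : Fin n) :
    forestsKji ε k j j = (forestsK ε k).filter (IsRoot · j) :=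
  Finset.filter_congr fun _ _ => and_iff_left ReflTransGen.refl

theorem filter_outPairs_self (hloop : ∀ a, ε a a = 0) (k : ℕ) (j : Fin n) :
    (outPairs ε k j j).filter (¬ IsRoot ·.2 j) = outPairs ε k j j := by
  refine Finset.filter_true_of_mem fun q hq hj => ?_
  obtain ⟨hpos, -, -, hmj⟩ := mem_outPairs.1 hq
  exact ne_of_weight_pos hloop hpos (hj.eq_of_reach hmj).symm

theorem swt_forestsKji_succ_add (hnonneg : ∀ a b, 0 ≤ ε a b) (hloop : ∀ a, ε a a = 0) (k : ℕ)
    (i j : Fin n) :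
    swt ε (forestsKji ε (k + 1) j i) + swt ε (forestsKji ε k j i) * ∑ p, ε p j
      = (if i = j then swt ε (forestsK ε (k + 1)) else 0)
        + ∑ m, swt ε (forestsKji ε k m i) * ε j m := by
  rw [← sum_inPairs hnonneg, ← sum_outPairs hnonneg]
  by_cases hij : i = j
  · subst hij
    -- split the forests by whether `i` is a root, and the pairs by whether `i` reaches `p`
    have hreach := sum_reroot (ε := ε) (k := k) (i := i) (j := i) hloop
    rw [Finset.filter_congr fun q _ => or_iff_left (not_not.2 rfl), filter_outPairs_self hloop]
      at hreach
    rw [if_pos rfl, ← Finset.sum_filter_add_sum_filter_not _ fun q => Reach q.2 i q.1, hreach,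
      sum_filter_not_reach_inPairs_self, swt, forestsKji_self, swt,
      ← Finset.sum_filter_add_sum_filter_not (forestsK ε (k + 1)) (IsRoot · i)]
    ring
  · have hji : j ≠ i := Ne.symm hij
    rw [if_neg hij, zero_add, swt_forestsKji_succ_of_ne hloop hji,
      ← Finset.filter_true_of_mem (s := inPairs ε k j i)
        (p := fun q => Reach q.2 j q.1 ∨ j ≠ i) fun _ _ => Or.inr hji, sum_reroot hloop,
      Finset.sum_filter_add_sum_filter_not]

end Recursion

noncomputable def forestMatrix (ε : Fin n → Fin n → ℝ) (k : ℕ) : Matrix (Fin n) (Fin n) ℝ :=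
  Matrix.of fun i j => swt ε (forestsKji ε k j i)

section ForestMatrix

variable {ε : Fin n → Fin n → ℝ}

theorem Kirchhoff_eq (hloop : ∀ a, ε a a = 0) :
    Kirchhoff ε = Matrix.diagonal (fun j => ∑ p, ε p j) - (Matrix.of ε)ᵀ := by
  ext i j
  by_cases h : i = j
  · subst h
    simp only [Kirchhoff, Matrix.of_apply, Matrix.sub_apply, Matrix.diagonal_apply_eq,
      Matrix.transpose_apply, hloop, sub_zero]
    exact Finset.sum_filter_of_ne fun p _ hp hpi => hp (hpi ▸ hloop i)
  · simp [Kirchhoff, h, Matrix.diagonal_apply_ne]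

theorem forestMatrix_succ (hnonneg : ∀ a b, 0 ≤ ε a b) (hloop : ∀ a, ε a a = 0) (k : ℕ) :
    forestMatrix ε (k + 1)
      = swt ε (forestsK ε (k + 1)) • 1 - forestMatrix ε k * Kirchhoff ε := by
  ext i j
  have h := swt_forestsKji_succ_add hnonneg hloop k i j
  rw [Kirchhoff_eq hloop, Matrix.mul_sub, Matrix.sub_apply, Matrix.sub_apply, Matrix.mul_diagonal,
    Matrix.mul_apply]
  simp only [Matrix.smul_apply, Matrix.one_apply, Matrix.transpose_apply, Matrix.of_apply,
    forestMatrix, smul_eq_mul, mul_ite, mul_one, mul_zero]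
  linarith

theorem forestsK_zero : forestsK ε 0 = {∅} := by
  ext F
  simp only [mem_forestsK, Finset.card_eq_zero, Finset.mem_singleton]
  exact ⟨And.right, fun h => ⟨h ▸ isSpForest_empty, h⟩⟩

theorem swt_forestsK_zero : swt ε (forestsK ε 0) = 1 := by
  rw [forestsK_zero, swt, Finset.sum_singleton, fweight, Finset.prod_empty]

theorem forestMatrix_zero : forestMatrix ε 0 = 1 := by
  ext i j
  rw [forestMatrix, Matrix.of_apply, forestsKji, forestsK_zero, Matrix.one_apply]
  by_cases h : i = j
  · subst h
    rw [Finset.filter_singleton, if_pos ⟨fun _ => Finset.notMem_empty _, .refl⟩,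
      ← swt_forestsK_zero (ε := ε), forestsK_zero, if_pos rfl]
  · rw [if_neg h, Finset.filter_singleton, if_neg fun h' => h ?_]
    · rfl
    · rcases h'.2.cases_head with h' | ⟨c, hc, -⟩
      exacts [h'.symm, absurd hc (Finset.notMem_empty _)]

theorem forestsK_maxArcs_succ : forestsK ε (maxArcs ε + 1) = ∅ :=
  Finset.eq_empty_of_forall_notMem fun F hF => by
    obtain ⟨hsp, hcard⟩ := mem_forestsK.1 hF
    have hle : F.card ≤ maxArcs ε :=
      Finset.le_sup (f := Finset.card) (Finset.mem_filter.2 ⟨Finset.mem_univ F, hsp⟩)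
    omega

theorem Qmax_mul_Kirchhoff (hnonneg : ∀ a b, 0 ≤ ε a b) (hloop : ∀ a, ε a a = 0) :
    Qmax ε * Kirchhoff ε = 0 := by
  have h := forestMatrix_succ hnonneg hloop (maxArcs ε)
  have h0 : forestMatrix ε (maxArcs ε + 1) = 0 := by
    ext i j
    simp [forestMatrix, forestsKji, forestsK_maxArcs_succ, swt]
  rw [h0, forestsK_maxArcs_succ, swt, Finset.sum_empty, zero_smul, zero_sub, eq_comm,
    neg_eq_zero] at h
  exact h

theorem Qmax_mul_forestMatrix (hnonneg : ∀ a b, 0 ≤ ε a b) (hloop : ∀ a, ε a a = 0) (k : ℕ) :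
    Qmax ε * forestMatrix ε k = swt ε (forestsK ε k) • Qmax ε := by
  induction k with
  | zero =>
    rw [forestMatrix_zero, Matrix.mul_one, swt_forestsK_zero, one_smul]
  | succ k ih =>
    rw [forestMatrix_succ hnonneg hloop, Matrix.mul_sub, Matrix.mul_smul, Matrix.mul_one,
      ← Matrix.mul_assoc, ih, Matrix.smul_mul, Qmax_mul_Kirchhoff hnonneg hloop, smul_zero,
      sub_zero]

theorem Qmax_mul_Qmax (hnonneg : ∀ a b, 0 ≤ ε a b) (hloop : ∀ a, ε a a = 0) :
    Qmax ε * Qmax ε = swt ε (forestsK ε (maxArcs ε)) • Qmax ε :=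
  Qmax_mul_forestMatrix hnonneg hloop (maxArcs ε)

theorem swt_forestsK_maxArcs_pos : 0 < swt ε (forestsK ε (maxArcs ε)) := by
  obtain ⟨F, hF, hcard⟩ := Finset.exists_mem_eq_sup _
    ⟨∅, Finset.mem_filter.2 ⟨Finset.mem_univ _, isSpForest_empty⟩⟩ Finset.card
  refine Finset.sum_pos (fun G hG => Finset.prod_pos fun p hp => (mem_forestsK.1 hG).1.1 p hp)
    ⟨F, mem_forestsK.2 ⟨(Finset.mem_filter.1 hF).2, hcard.symm⟩⟩

end ForestMatrix

/-- The normalized matrix of maximum out forests is idempotent. -/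
theorem stmt16 (ε : Fin n → Fin n → ℝ) (hnonneg : ∀ i j, 0 ≤ ε i j)
    (hloop : ∀ i, ε i i = 0) :
    Jbar ε * Jbar ε = Jbar ε := by
  have hσ := (swt_forestsK_maxArcs_pos (ε := ε)).ne'
  rw [Jbar, Matrix.smul_mul, Matrix.mul_smul, Qmax_mul_Qmax hnonneg hloop,
    smul_smul, smul_smul]
  congr 1
  field_simp
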